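/- arXiv:1707.03010 — 5 statements merged into one kernel-verified Lean document; each statement's English description precedes it below -/
import Mathlib

section
/- Let (Ω, F, P) be a probability space and let M and Q be real random variables with Q > 0 almost surely, such that for all a > 0 and b > 0, P(M ≥ a and Q ≤ b) ≤ exp(−a²/(2b)). Then for every x > 0, P( M ≥ √(4e · Q · (x + log(2 + |log Q|))) ) ≤ (π²/3) · exp(−2x). -/
open MeasureTheory

/-- If `P(M ≥ a, Q ≤ b) ≤ exp(-a²/(2b))` for all `a, b > 0` and `Q > 0` a.s.,
then `P(M ≥ √(4e Q (x + log(2 + |log Q|)))) ≤ (π²/3) exp(-2x)` for every `x > 0`. -/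
theorem stmt_4 {Ω : Type*} [MeasurableSpace Ω] (P : Measure Ω) [IsProbabilityMeasure P]
    (M Q : Ω → ℝ) (hM : Measurable M) (hQ : Measurable Q)
    (hQpos : ∀ᵐ ω ∂P, 0 < Q ω)
    (hbound : ∀ a > (0 : ℝ), ∀ b > (0 : ℝ),
      P {ω | a ≤ M ω ∧ Q ω ≤ b} ≤ ENNReal.ofReal (Real.exp (-a ^ 2 / (2 * b)))) :
    ∀ x > (0 : ℝ),
      P {ω | Real.sqrt (4 * Real.exp 1 * Q ω *
              (x + Real.log (2 + |Real.log (Q ω)|))) ≤ M ω}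
        ≤ ENNReal.ofReal (Real.pi ^ 2 / 3 * Real.exp (-2 * x)) := by
  intro x hx
  set E : Set Ω := {ω | Real.sqrt (4 * Real.exp 1 * Q ω *
      (x + Real.log (2 + |Real.log (Q ω)|))) ≤ M ω} with hE
  set c : ℤ → ℝ := fun k => (k.natAbs : ℝ) + (if 0 ≤ k then 2 else 1) with hcdef
  have hc2 : ∀ k, (2 : ℝ) ≤ c k := by
    intro k
    by_cases hk : 0 ≤ k
    · simp only [hcdef, if_pos hk]
      have : (0 : ℝ) ≤ (k.natAbs : ℝ) := Nat.cast_nonneg _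
      linarith
    · simp only [hcdef, if_neg hk]
      have h1 : 1 ≤ k.natAbs := by omega
      have : (1 : ℝ) ≤ (k.natAbs : ℝ) := by exact_mod_cast h1
      linarith
  set S : ℤ → Set Ω := fun k =>
    E ∩ {ω | Real.exp k ≤ Q ω ∧ Q ω < Real.exp ((k : ℝ) + 1)} with hS
  -- covering
  have hsub : ∀ ω, ω ∈ E → 0 < Q ω → ω ∈ ⋃ k, S k := by
    intro ω hωE hωQ
    refine Set.mem_iUnion.2 ⟨⌊Real.log (Q ω)⌋, hωE, ?_, ?_⟩
    · calc Real.exp (⌊Real.log (Q ω)⌋ : ℝ) ≤ Real.exp (Real.log (Q ω)) :=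
            Real.exp_le_exp.2 (Int.floor_le _)
        _ = Q ω := Real.exp_log hωQ
    · calc Q ω = Real.exp (Real.log (Q ω)) := (Real.exp_log hωQ).symm
        _ < Real.exp ((⌊Real.log (Q ω)⌋ : ℝ) + 1) :=
            Real.exp_lt_exp.2 (Int.lt_floor_add_one _)
  -- per-slice bound
  have key : ∀ k : ℤ, P (S k) ≤ ENNReal.ofReal (Real.exp (-2 * x) / (c k) ^ 2) := by
    intro k
    set bk : ℝ := Real.exp ((k : ℝ) + 1) with hbk
    have hbkpos : 0 < bk := Real.exp_pos _
    have hck2 : (2 : ℝ) ≤ c k := hc2 k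
    have hckpos : (0 : ℝ) < c k := by linarith
    have hlogck : 0 ≤ Real.log (c k) := Real.log_nonneg (by linarith)
    have hargpos : 0 < 4 * bk * (x + Real.log (c k)) := by positivity
    set a : ℝ := Real.sqrt (4 * bk * (x + Real.log (c k))) with ha
    have hapos : 0 < a := Real.sqrt_pos.2 hargpos
    have hsubset : S k ⊆ {ω | a ≤ M ω ∧ Q ω ≤ bk} := by
      rintro ω ⟨hωE, hlo, hhi⟩
      have hQω : 0 < Q ω := lt_of_lt_of_le (Real.exp_pos _) hlo
      have h2 : c k ≤ 2 + |Real.log (Q ω)| := by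
        by_cases hk : 0 ≤ k
        · have hlog : (k : ℝ) ≤ Real.log (Q ω) := by
            rw [Real.le_log_iff_exp_le hQω]; exact hlo
          have habs : (k : ℝ) ≤ |Real.log (Q ω)| :=
            le_trans hlog (le_abs_self _)
          have hcast : ((k.natAbs : ℝ)) = (k : ℝ) := by
            rw [Nat.cast_natAbs]
            exact_mod_cast abs_of_nonneg hk
          simp only [hcdef, if_pos hk]
          rw [hcast]
          linarith
        · push_neg at hk
          have hlog : Real.log (Q ω) < (k : ℝ) + 1 := by
            have h := hhi
            rw [← Real.exp_log hQω] at h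
            exact Real.exp_lt_exp.1 h
          have hk1 : (k : ℝ) + 1 ≤ 0 := by
            have : k + 1 ≤ 0 := by omega
            exact_mod_cast this
          have habs : -((k : ℝ) + 1) ≤ |Real.log (Q ω)| := by
            rw [abs_of_nonpos (by linarith)]
            linarith
          have hcast : ((k.natAbs : ℝ)) = -(k : ℝ) := by
            rw [Nat.cast_natAbs]
            exact_mod_cast abs_of_nonpos hk.le
          simp only [hcdef, if_neg (not_le.2 hk)]
          rw [hcast]
          linarith
      refine ⟨le_trans ?_ hωE, hhi.le⟩
      apply Real.sqrt_le_sqrt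
      have h1 : bk ≤ Real.exp 1 * Q ω := by
        have : bk = Real.exp 1 * Real.exp (k : ℝ) := by
          rw [hbk, ← Real.exp_add]; ring_nf
        rw [this]
        exact mul_le_mul_of_nonneg_left hlo (Real.exp_pos 1).le
      have h3 : Real.log (c k) ≤ Real.log (2 + |Real.log (Q ω)|) :=
        Real.log_le_log hckpos h2
      have h4 : 0 < Real.exp 1 * Q ω := by positivity
      nlinarith [hx, hlogck, mul_le_mul h1 h3 hlogck h4.le,
        mul_le_mul_of_nonneg_right h1 hx.le]
    calc P (S k) ≤ P {ω | a ≤ M ω ∧ Q ω ≤ bk} := measure_mono hsubset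
      _ ≤ ENNReal.ofReal (Real.exp (-a ^ 2 / (2 * bk))) := hbound a hapos bk hbkpos
      _ = ENNReal.ofReal (Real.exp (-2 * x) / (c k) ^ 2) := by
          congr 1
          rw [ha, Real.sq_sqrt hargpos.le]
          have harg : -(4 * bk * (x + Real.log (c k))) / (2 * bk)
              = -2 * x + -(Real.log (c k) + Real.log (c k)) := by
            field_simp; ring
          rw [harg, Real.exp_add, Real.exp_neg, Real.exp_add, Real.exp_log hckpos]
          rw [div_eq_mul_inv]
          congr 1
          ring
  -- main estimate
  have hnull : P (E \ ⋃ k, S k) = 0 := by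
    refine measure_mono_null ?_ (ae_iff.1 hQpos)
    rintro ω ⟨hωE, hωU⟩
    intro h0
    exact hωU (hsub ω hωE h0)
  have step1 : P E ≤ ∑' k : ℤ, P (S k) := by
    calc P E ≤ P (E ∩ ⋃ k, S k) + P (E \ ⋃ k, S k) :=
          measure_le_inter_add_diff P E _
      _ = P (E ∩ ⋃ k, S k) := by rw [hnull, add_zero]
      _ ≤ P (⋃ k, S k) := measure_mono Set.inter_subset_right
      _ ≤ ∑' k : ℤ, P (S k) := measure_iUnion_le S
  have step2 : P E ≤ ∑' k : ℤ, ENNReal.ofReal (Real.exp (-2 * x) / (c k) ^ 2) :=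
    step1.trans (ENNReal.tsum_le_tsum key)
  -- compute the sum
  set g : ℕ → ENNReal := fun n => ENNReal.ofReal (Real.exp (-2 * x) / ((n : ℝ) + 2) ^ 2)
    with hg
  have hFrec : (fun k : ℤ => ENNReal.ofReal (Real.exp (-2 * x) / (c k) ^ 2))
      = Int.rec g g := by
    funext k
    cases k with
    | ofNat n =>
        have h1 : (0 : ℤ) ≤ Int.ofNat n := Int.ofNat_nonneg n
        have h2 : (Int.ofNat n).natAbs = n := rfl
        simp only [hcdef, hg, if_pos h1, h2]
    | negSucc n =>
        have h1 : ¬ (0 : ℤ) ≤ Int.negSucc n := not_le.2 (Int.negSucc_lt_zero n)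
        have h2 : (Int.negSucc n).natAbs = n + 1 := rfl
        simp only [hcdef, hg, if_neg h1, h2]
        congr 2
        push_cast
        ring
  have hsum : ∑' k : ℤ, ENNReal.ofReal (Real.exp (-2 * x) / (c k) ^ 2)
      = (∑' n : ℕ, g n) + ∑' n : ℕ, g n := by
    rw [hFrec]
    exact tsum_int_rec ENNReal.summable ENNReal.summable
  -- bound ∑' g
  have hzeta : ∑' n : ℕ, ENNReal.ofReal ((1 : ℝ) / (n : ℝ) ^ 2)
      = ENNReal.ofReal (Real.pi ^ 2 / 6) := by
    rw [← ENNReal.ofReal_tsum_of_nonneg (fun n => by positivity)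
      hasSum_zeta_two.summable, hasSum_zeta_two.tsum_eq]
  have hgsum : ∑' n : ℕ, g n ≤ ENNReal.ofReal (Real.exp (-2 * x)) *
      ENNReal.ofReal (Real.pi ^ 2 / 6) := by
    have hgeq : ∀ n : ℕ, g n = ENNReal.ofReal (Real.exp (-2 * x)) *
        ENNReal.ofReal ((1 : ℝ) / ((n : ℝ) + 2) ^ 2) := by
      intro n
      rw [hg, ← ENNReal.ofReal_mul (Real.exp_pos _).le]
      congr 1
      ring
    calc ∑' n : ℕ, g n
        = ENNReal.ofReal (Real.exp (-2 * x)) *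
            ∑' n : ℕ, ENNReal.ofReal ((1 : ℝ) / ((n : ℝ) + 2) ^ 2) := by
          simp_rw [hgeq]; rw [ENNReal.tsum_mul_left]
      _ ≤ ENNReal.ofReal (Real.exp (-2 * x)) * ENNReal.ofReal (Real.pi ^ 2 / 6) := by
          gcongr
          rw [← hzeta]
          have : ∀ n : ℕ, ENNReal.ofReal ((1 : ℝ) / ((n : ℝ) + 2) ^ 2)
              = (fun m : ℕ => ENNReal.ofReal ((1 : ℝ) / (m : ℝ) ^ 2)) (n + 2) := by
            intro n
            norm_num
          simp_rw [this]
          exact ENNReal.tsum_comp_le_tsum_of_injective (add_left_injective 2) _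
  -- finish
  refine step2.trans ?_
  rw [hsum]
  have : ENNReal.ofReal (Real.exp (-2 * x)) * ENNReal.ofReal (Real.pi ^ 2 / 6) +
      ENNReal.ofReal (Real.exp (-2 * x)) * ENNReal.ofReal (Real.pi ^ 2 / 6)
      = ENNReal.ofReal (Real.pi ^ 2 / 3 * Real.exp (-2 * x)) := by
    rw [← ENNReal.ofReal_mul (Real.exp_pos _).le, ← ENNReal.ofReal_add (by positivity)
      (by positivity)]
    congr 1
    ring
  calc (∑' n : ℕ, g n) + ∑' n : ℕ, g n
      ≤ ENNReal.ofReal (Real.exp (-2 * x)) * ENNReal.ofReal (Real.pi ^ 2 / 6) +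
        ENNReal.ofReal (Real.exp (-2 * x)) * ENNReal.ofReal (Real.pi ^ 2 / 6) :=
        add_le_add hgsum hgsum
    _ = ENNReal.ofReal (Real.pi ^ 2 / 3 * Real.exp (-2 * x)) := this
end

section
/- Let A and B be real d×d matrices, γ ∈ (0,1), U = A − B, and let 𝒜 = supp(A) ⊆ {1,…,d}² be the set of index pairs where A is nonzero. Then γ·|U|₁ + |A|₁ − |B|₁ ≤ (1+γ)·|U_{|𝒜}|₁ − (1−γ)·|U_{|𝒜ᶜ}|₁ ≤ (1+γ)·√(‖A‖₀)·‖U_{|𝒜}‖_F − (1−γ)·|U_{|𝒜ᶜ}|₁, where |·|₁ is the entrywise ℓ¹ norm, ‖·‖_F is the Frobenius norm, ‖A‖₀ is the number of nonzero entries of A, and U_{|S} denotes the matrix equal to U on index set S and zero elsewhere. -/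
/-
Entrywise, `|Aᵢⱼ| - |Bᵢⱼ| ≤ |Uᵢⱼ|` on the support of `A`, while off it `|Aᵢⱼ| - |Bᵢⱼ| = -|Uᵢⱼ|`;
summing and adding `γ|U|₁ = γ|U_𝒜|₁ + γ|U_𝒜ᶜ|₁` gives the first inequality. The second is
Cauchy–Schwarz on the `‖A‖₀` entries of `U_𝒜`.
-/

open Matrix

/-- Entrywise ℓ¹ norm of a matrix. -/
noncomputable def matL1 {d : ℕ} (M : Matrix (Fin d) (Fin d) ℝ) : ℝ :=
  ∑ i, ∑ j, |M i j|

/-- Frobenius norm of a matrix. -/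
noncomputable def matFrob {d : ℕ} (M : Matrix (Fin d) (Fin d) ℝ) : ℝ :=
  Real.sqrt (∑ i, ∑ j, (M i j) ^ 2)

open Classical in
/-- Restriction of a matrix to a set of index pairs (zero outside the set). -/
noncomputable def matRestrict {d : ℕ} (M : Matrix (Fin d) (Fin d) ℝ)
    (S : Set (Fin d × Fin d)) : Matrix (Fin d) (Fin d) ℝ :=
  fun i j => if (i, j) ∈ S then M i j else 0

open Finset

section restrict

variable {d : ℕ}

open Classical in
lemma sum_sum_matRestrict {g : ℝ → ℝ} (hg : g 0 = 0) (M : Matrix (Fin d) (Fin d) ℝ)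
    (S : Set (Fin d × Fin d)) :
    ∑ i, ∑ j, g (matRestrict M S i j) = ∑ p with p ∈ S, g (M p.1 p.2) := by
  rw [← Fintype.sum_prod_type', sum_filter]
  refine sum_congr rfl fun p _ => ?_
  by_cases hp : p ∈ S <;> simp [matRestrict, hp, hg]

lemma matL1_restrict_add_matL1_restrict_compl (M : Matrix (Fin d) (Fin d) ℝ)
    (S : Set (Fin d × Fin d)) :
    matL1 (matRestrict M S) + matL1 (matRestrict M Sᶜ) = matL1 M := by
  simp only [matL1, ← sum_add_distrib]
  refine sum_congr rfl fun i _ => sum_congr rfl fun j _ => ?_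
  by_cases h : (i, j) ∈ S <;> simp [matRestrict, h]

lemma matL1_restrict_le_sqrt_ncard_mul_matFrob (M : Matrix (Fin d) (Fin d) ℝ)
    (S : Set (Fin d × Fin d)) :
    matL1 (matRestrict M S) ≤ √(S.ncard : ℝ) * matFrob (matRestrict M S) := by
  classical
  set T : Finset (Fin d × Fin d) := {p | p ∈ S}
  have hT : S.ncard = #T := by
    rw [← Set.ncard_coe_finset, coe_filter_univ, Set.ofPred_mem_eq]
  have hL1 : matL1 (matRestrict M S) = ∑ p ∈ T, |M p.1 p.2| :=
    sum_sum_matRestrict abs_zero M S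
  have hFrob : matFrob (matRestrict M S) = √(∑ p ∈ T, M p.1 p.2 ^ 2) := by
    rw [matFrob, sum_sum_matRestrict (g := (· ^ 2)) (zero_pow two_ne_zero) M S]
  have hCS : (∑ p ∈ T, |M p.1 p.2|) ^ 2 ≤ #T * ∑ p ∈ T, M p.1 p.2 ^ 2 := by
    simpa only [sq_abs] using sq_sum_le_card_mul_sum_sq (s := T) (f := fun p => |M p.1 p.2|)
  rw [hL1, hFrob, hT, ← Real.sqrt_mul (Nat.cast_nonneg _)]
  exact Real.le_sqrt_of_sq_le hCS

lemma matL1_sub_matL1_le_restrict_support (A B : Matrix (Fin d) (Fin d) ℝ) :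
    matL1 A - matL1 B ≤
      matL1 (matRestrict (A - B) {p | A p.1 p.2 ≠ 0}) -
        matL1 (matRestrict (A - B) {p | A p.1 p.2 ≠ 0}ᶜ) := by
  simp only [matL1, ← sum_sub_distrib]
  refine sum_le_sum fun i _ => sum_le_sum fun j _ => ?_
  by_cases h : A i j = 0
  · simp [matRestrict, h]
  · simpa [matRestrict, h] using abs_sub_abs_le_abs_sub (A i j) (B i j)

end restrict

theorem stmt_5_general (d : ℕ) (A B : Matrix (Fin d) (Fin d) ℝ)
    (γ : ℝ) (hγ0 : 0 < γ)
    (U : Matrix (Fin d) (Fin d) ℝ) (hU : U = A - B)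
    (𝒜 : Set (Fin d × Fin d)) (h𝒜 : 𝒜 = {p : Fin d × Fin d | A p.1 p.2 ≠ 0}) :
    γ * matL1 U + matL1 A - matL1 B ≤
      (1 + γ) * matL1 (matRestrict U 𝒜) - (1 - γ) * matL1 (matRestrict U 𝒜ᶜ) ∧
    (1 + γ) * matL1 (matRestrict U 𝒜) - (1 - γ) * matL1 (matRestrict U 𝒜ᶜ) ≤
      (1 + γ) * Real.sqrt ({p : Fin d × Fin d | A p.1 p.2 ≠ 0}.ncard) *
          matFrob (matRestrict U 𝒜) -
        (1 - γ) * matL1 (matRestrict U 𝒜ᶜ) := by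
  subst hU h𝒜
  have hsplit := matL1_restrict_add_matL1_restrict_compl (A - B) {p | A p.1 p.2 ≠ 0}
  have hsupp := matL1_sub_matL1_le_restrict_support A B
  have hCS := matL1_restrict_le_sqrt_ncard_mul_matFrob (A - B) {p | A p.1 p.2 ≠ 0}
  refine ⟨by rw [← hsplit]; linarith, ?_⟩
  have := mul_le_mul_of_nonneg_left hCS (by linarith : (0 : ℝ) ≤ 1 + γ)
  linarith

/-- For `U = A - B`, `γ ∈ (0,1)` and `𝒜 = supp A`,
`γ|U|₁ + |A|₁ - |B|₁ ≤ (1+γ)|U_𝒜|₁ - (1-γ)|U_𝒜ᶜ|₁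
  ≤ (1+γ)√‖A‖₀ ‖U_𝒜‖_F - (1-γ)|U_𝒜ᶜ|₁`. -/
theorem stmt_5 (d : ℕ) (A B : Matrix (Fin d) (Fin d) ℝ)
    (γ : ℝ) (hγ0 : 0 < γ) (hγ1 : γ < 1)
    (U : Matrix (Fin d) (Fin d) ℝ) (hU : U = A - B)
    (𝒜 : Set (Fin d × Fin d)) (h𝒜 : 𝒜 = {p : Fin d × Fin d | A p.1 p.2 ≠ 0}) :
    γ * matL1 U + matL1 A - matL1 B ≤
      (1 + γ) * matL1 (matRestrict U 𝒜) - (1 - γ) * matL1 (matRestrict U 𝒜ᶜ) ∧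
    (1 + γ) * matL1 (matRestrict U 𝒜) - (1 - γ) * matL1 (matRestrict U 𝒜ᶜ) ≤
      (1 + γ) * Real.sqrt ({p : Fin d × Fin d | A p.1 p.2 ≠ 0}.ncard) *
          matFrob (matRestrict U 𝒜) -
        (1 - γ) * matL1 (matRestrict U 𝒜ᶜ) :=
  stmt_5_general d A B γ hγ0 U hU 𝒜 h𝒜
end

section
/- Let d ≥ 1, 1 ≤ s ≤ d, γ > 1, 0 ≤ τ < γ − 1, λ > 0, κ > 0, and set c₀ = (γ+τ+1)/(γ−τ−1). Let Ĉ be a real d×d symmetric positive semidefinite matrix and ε a real d×d matrix such that: (i) for every u in the cone C(s,c₀), uᵀĈu ≥ κ²·‖u‖₂²; and (ii) every entry of ε has absolute value at most λ/γ. Let A₀ be a row-s-sparse d×d matrix and let Â be a minimizer over d×d matrices of L(A) = tr(Aᵀε) + ½·tr((A−A₀)Ĉ(A−A₀)ᵀ) + λ·|A|₁. Then for every row-s-sparse d×d matrix A: 2τγ⁻¹λ·|Â−A|₁ + tr((Â−A₀)Ĉ(Â−A₀)ᵀ) ≤ tr((A−A₀)Ĉ(A−A₀)ᵀ) + ((1+γ+τ)/(γκ))²·λ²·d·s.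 -/
open Matrix

/-- The Lasso objective `L(A) = tr(Aᵀ ε) + ½ tr((A - A₀) Ĉ (A - A₀)ᵀ) + λ |A|₁`. -/
noncomputable def lassoObj {d : ℕ} (Chat eps A₀ : Matrix (Fin d) (Fin d) ℝ) (lam : ℝ)
    (A : Matrix (Fin d) (Fin d) ℝ) : ℝ :=
  (Aᵀ * eps).trace + (1 / 2) * ((A - A₀) * Chat * (A - A₀)ᵀ).trace + lam * matL1 A

/-- The cone `C(s, c₀)`: vectors whose ℓ¹ norm is at most `(1 + c₀)` times the ℓ¹ norm
of their `s` largest (in absolute value) entries. -/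
def inCone {d : ℕ} (s : ℕ) (c₀ : ℝ) (u : Fin d → ℝ) : Prop :=
  ∃ I : Finset (Fin d), I.card = s ∧ (∀ i ∈ I, ∀ j ∉ I, |u j| ≤ |u i|) ∧
    ∑ j, |u j| ≤ (1 + c₀) * ∑ i ∈ I, |u i|

/-- A matrix is row-`s`-sparse if every row has at most `s` nonzero entries. -/
def rowSparse {d : ℕ} (s : ℕ) (A : Matrix (Fin d) (Fin d) ℝ) : Prop :=
  ∀ i, {j | A i j ≠ 0}.ncard ≤ s


/-!
Since the Lasso objective is convex, its minimiser `Â` satisfies the first-order condition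
`tr((Â - A)ᵀ ε) + tr((Â - A₀) Ĉ (Â - A)ᵀ) ≤ λ (|A|₁ - |Â|₁)`. Expanding the quadratic part around
`Â` and bounding the noise term by `(λ/γ) |Â - A|₁` reduces the claim to a bound on
`2(λ/γ)(1+τ)|Â - A|₁ + 2λ(|A|₁ - |Â|₁) - tr((Â - A) Ĉ (Â - A)ᵀ)`, which splits over the rows.

For a row `u = Âᵢ - Aᵢ`, with `S` the support of `Aᵢ`, the linear part is at most
`(2λ/γ)((γ+1+τ)|u_S|₁ - (γ-1-τ)|u_{Sᶜ}|₁)`. Either this is negative, or `|u_{Sᶜ}|₁ ≤ c₀ |u_S|₁`;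
then `u` lies in the cone, because its `s` largest entries carry at least `|u_S|₁`, and the
restricted eigenvalue condition together with Cauchy–Schwarz gives `κ² |u_S|₁² ≤ s uᵀĈu`.
AM–GM bounds the row by `((1+γ+τ)/(γκ))² λ² s`, and there are `d` rows.
-/

section TopEntries

variable {α : Type*} [DecidableEq α]

theorem exists_finset_card_eq_forall_notMem_le [Fintype α] (f : α → ℝ) {s : ℕ}
    (hs : s ≤ Fintype.card α) :
    ∃ I : Finset α, I.card = s ∧ ∀ i ∈ I, ∀ j ∉ I, f j ≤ f i := by
  induction s with
  | zero => exact ⟨∅, rfl, by simp⟩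
  | succ n ih =>
    obtain ⟨I, hcard, hdom⟩ := ih (Nat.le_of_succ_le hs)
    have hne : Iᶜ.Nonempty := by
      rw [← Finset.card_pos, Finset.card_compl, hcard]
      omega
    obtain ⟨j₀, hj₀, hmax⟩ := Finset.exists_max_image Iᶜ f hne
    refine ⟨insert j₀ I, by rw [Finset.card_insert_of_notMem (Finset.mem_compl.mp hj₀), hcard],
      fun i hi j hj => ?_⟩
    have hjI : j ∉ I := fun h => hj (Finset.mem_insert_of_mem h)
    rcases Finset.mem_insert.mp hi with rfl | hiI
    · exact hmax j (Finset.mem_compl.mpr hjI)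
    · exact hdom i hiI j hjI

theorem sum_le_sum_of_card_le_of_forall_notMem_le {g : α → ℝ} (hg : ∀ x, 0 ≤ g x)
    {S I : Finset α} (hcard : S.card ≤ I.card) (hdom : ∀ i ∈ I, ∀ j ∉ I, g j ≤ g i) :
    ∑ j ∈ S, g j ≤ ∑ i ∈ I, g i := by
  rw [← Finset.sum_inter_add_sum_sdiff S I, ← Finset.sum_inter_add_sum_sdiff I S,
    Finset.inter_comm]
  have hcard' : (S \ I).card ≤ (I \ S).card := by
    have := Finset.card_inter_add_card_sdiff S I
    have := Finset.card_inter_add_card_sdiff I S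
    rw [Finset.inter_comm] at this
    omega
  suffices ∑ j ∈ S \ I, g j ≤ ∑ j ∈ I \ S, g j by linarith
  rcases (I \ S).eq_empty_or_nonempty with hIS | hIS
  · rw [hIS, Finset.card_empty, Nat.le_zero, Finset.card_eq_zero] at hcard'
    simp [hIS, hcard']
  · obtain ⟨m, hm, hmin⟩ := Finset.exists_min_image (I \ S) g hIS
    calc ∑ j ∈ S \ I, g j ≤ (S \ I).card * g m := by
          rw [← nsmul_eq_mul]
          exact Finset.sum_le_card_nsmul _ _ _ fun j hj =>
            hdom m (Finset.mem_sdiff.mp hm).1 j (Finset.mem_sdiff.mp hj).2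
      _ ≤ (I \ S).card * g m := by gcongr; exact hg m
      _ ≤ ∑ j ∈ I \ S, g j := by
          rw [← nsmul_eq_mul]
          exact Finset.card_nsmul_le_sum _ _ _ hmin

end TopEntries

theorem inCone_of_sum_compl_le {d s : ℕ} {c₀ : ℝ} (hsd : s ≤ d) (hc₀ : 0 ≤ c₀)
    {u : Fin d → ℝ} {S : Finset (Fin d)} (hS : S.card ≤ s)
    (h : ∑ j ∈ Sᶜ, |u j| ≤ c₀ * ∑ j ∈ S, |u j|) : inCone s c₀ u := by
  obtain ⟨I, hIcard, hIdom⟩ :=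
    exists_finset_card_eq_forall_notMem_le (fun j => |u j|) (by simpa using hsd)
  have hSI : ∑ j ∈ S, |u j| ≤ ∑ i ∈ I, |u i| :=
    sum_le_sum_of_card_le_of_forall_notMem_le (fun j => abs_nonneg (u j)) (by omega) hIdom
  refine ⟨I, hIcard, hIdom, ?_⟩
  rw [← Finset.sum_add_sum_compl S]
  nlinarith

theorem sq_sum_abs_le_card_mul_sum_sq {ι : Type*} [Fintype ι] (u : ι → ℝ) (S : Finset ι) :
    (∑ j ∈ S, |u j|) ^ 2 ≤ S.card * ∑ j, u j ^ 2 :=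
  calc (∑ j ∈ S, |u j|) ^ 2 ≤ S.card * ∑ j ∈ S, |u j| ^ 2 := sq_sum_le_card_mul_sum_sq
    _ ≤ S.card * ∑ j, u j ^ 2 := by
      simp_rw [sq_abs]
      exact mul_le_mul_of_nonneg_left (Finset.sum_le_sum_of_subset_of_nonneg
        (Finset.subset_univ S) fun j _ _ => sq_nonneg (u j)) (Nat.cast_nonneg _)

theorem two_mul_mul_le_of_sq_le_mul {x s T : ℝ} (c : ℝ) (hs : 0 ≤ s) (hT : 0 ≤ T)
    (h : x ^ 2 ≤ s * T) : 2 * c * x ≤ c ^ 2 * s + T := by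
  -- `(2 c x)² ≤ 4 c² s T ≤ (c² s + T)²`
  have : (2 * c * x) ^ 2 ≤ (c ^ 2 * s + T) ^ 2 := by
    nlinarith [sq_nonneg (c ^ 2 * s - T), mul_le_mul_of_nonneg_left h (sq_nonneg c)]
  exact (abs_le_of_sq_le_sq' this (by positivity)).2

theorem sum_abs_sub_sum_abs_le {ι : Type*} [Fintype ι] [DecidableEq ι] {v w : ι → ℝ}
    {S : Finset ι} (hw : ∀ j ∉ S, w j = 0) :
    ∑ j, (|w j| - |v j|) ≤ ∑ j ∈ S, |v j - w j| - ∑ j ∈ Sᶜ, |v j - w j| := by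
  rw [← Finset.sum_add_sum_compl S, sub_eq_add_neg, ← Finset.sum_neg_distrib]
  gcongr with j hj j hj
  · rw [abs_sub_comm]
    exact abs_sub_abs_le_abs_sub (w j) (v j)
  · simp [hw j (Finset.mem_compl.mp hj)]

theorem linear_sub_quadForm_le {d s : ℕ} (hsd : s ≤ d) {γ τ lam κ c₀ : ℝ} (hγ : 1 < γ) (hτ0 : 0 ≤ τ)
    (hτ : τ < γ - 1) (hlam : 0 < lam) (hκ : 0 < κ) (hc₀ : c₀ = (γ + τ + 1) / (γ - τ - 1))
    {Chat : Matrix (Fin d) (Fin d) ℝ} (hC : Chat.PosSemidef)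
    (hRE : ∀ u : Fin d → ℝ, inCone s c₀ u → κ ^ 2 * ∑ i, u i ^ 2 ≤ u ⬝ᵥ Chat *ᵥ u)
    {v w : Fin d → ℝ} {S : Finset (Fin d)} (hS : S.card ≤ s) (hw : ∀ j ∉ S, w j = 0) :
    2 * (lam / γ) * (1 + τ) * ∑ j, |v j - w j| + 2 * lam * ∑ j, (|w j| - |v j|)
        - (v - w) ⬝ᵥ Chat *ᵥ (v - w) ≤
      ((1 + γ + τ) / (γ * κ)) ^ 2 * lam ^ 2 * s := by
  set a := ∑ j ∈ S, |v j - w j|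
  set b := ∑ j ∈ Sᶜ, |v j - w j|
  set T := (v - w) ⬝ᵥ Chat *ᵥ (v - w)
  have hγ0 : 0 < γ := by linarith
  have hT : 0 ≤ T := by simpa only [star_trivial] using hC.dotProduct_mulVec_nonneg (v - w)
  have hb0 : 0 ≤ b := Finset.sum_nonneg fun j _ => abs_nonneg (v j - w j)
  have hreduce : 2 * (lam / γ) * (1 + τ) * ∑ j, |v j - w j| + 2 * lam * ∑ j, (|w j| - |v j|) - T ≤
      2 * (lam / γ) * ((γ + 1 + τ) * a - (γ - 1 - τ) * b) - T := by
    have hsplit : ∑ j, |v j - w j| = a + b := (Finset.sum_add_sum_compl S _).symm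
    have := mul_le_mul_of_nonneg_left (sum_abs_sub_sum_abs_le (v := v) hw)
      (by positivity : 0 ≤ 2 * lam)
    have hlam_eq : 2 * lam = 2 * (lam / γ) * γ := by field_simp
    rw [hsplit, hlam_eq]
    rw [hlam_eq] at this
    linarith
  by_cases hb : b ≤ c₀ * a
  · have hcone : inCone s c₀ (v - w) :=
      inCone_of_sum_compl_le hsd (by rw [hc₀]; apply div_nonneg <;> linarith) hS hb
    have hκa : (κ * a) ^ 2 ≤ s * T := by
      have hcs : a ^ 2 ≤ S.card * ∑ j, (v - w) j ^ 2 := sq_sum_abs_le_card_mul_sum_sq (v - w) S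
      have hScast : (S.card : ℝ) ≤ s := by exact_mod_cast hS
      nlinarith [hRE _ hcone,
        Finset.sum_nonneg fun j (_ : j ∈ Finset.univ) => sq_nonneg ((v - w) j)]
    have hamgm := two_mul_mul_le_of_sq_le_mul (lam * (1 + γ + τ) / (γ * κ)) (Nat.cast_nonneg s)
      hT hκa
    have hc : 2 * (lam * (1 + γ + τ) / (γ * κ)) * (κ * a) = 2 * (lam / γ) * ((γ + 1 + τ) * a) := by
      field_simp
      ring
    have hR : (lam * (1 + γ + τ) / (γ * κ)) ^ 2 * s =
        ((1 + γ + τ) / (γ * κ)) ^ 2 * lam ^ 2 * s := by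
      ring
    have : 0 ≤ 2 * (lam / γ) * ((γ - 1 - τ) * b) := by
      apply mul_nonneg (by positivity) (mul_nonneg (by linarith) hb0)
    nlinarith
  · have hneg : (γ + 1 + τ) * a < (γ - 1 - τ) * b := by
      rw [not_le, hc₀, div_mul_eq_mul_div, div_lt_iff₀ (by linarith)] at hb
      linarith
    have : 2 * (lam / γ) * ((γ + 1 + τ) * a - (γ - 1 - τ) * b) ≤ 0 :=
      mul_nonpos_of_nonneg_of_nonpos (by positivity) (by linarith)
    have : 0 ≤ ((1 + γ + τ) / (γ * κ)) ^ 2 * lam ^ 2 * s := by positivity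
    linarith

section MatrixLemmas

variable {d : ℕ}

theorem matL1_add_le (X Y : Matrix (Fin d) (Fin d) ℝ) : matL1 (X + Y) ≤ matL1 X + matL1 Y := by
  simp only [matL1, ← Finset.sum_add_distrib]
  gcongr with i _ j _
  exact abs_add_le (X i j) (Y i j)

theorem matL1_smul (c : ℝ) (X : Matrix (Fin d) (Fin d) ℝ) : matL1 (c • X) = |c| * matL1 X := by
  simp [matL1, abs_mul, Finset.mul_sum]

theorem neg_trace_transpose_mul_le {X E : Matrix (Fin d) (Fin d) ℝ} {c : ℝ}
    (hE : ∀ i j, |E i j| ≤ c) : -(Xᵀ * E).trace ≤ c * matL1 X := by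
  have htrace : (Xᵀ * E).trace = ∑ i, ∑ j, X i j * E i j := by
    simp only [Matrix.trace, Matrix.diag, Matrix.mul_apply, Matrix.transpose_apply]
    exact Finset.sum_comm
  rw [htrace, matL1, Finset.mul_sum, ← Finset.sum_neg_distrib]
  gcongr with i _
  rw [Finset.mul_sum, ← Finset.sum_neg_distrib]
  gcongr with j _
  calc -(X i j * E i j) ≤ |X i j| * |E i j| := abs_mul (X i j) (E i j) ▸ neg_le_abs _
    _ ≤ c * |X i j| := by rw [mul_comm]; exact mul_le_mul_of_nonneg_right (hE i j) (abs_nonneg _)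

theorem trace_mul_mul_transpose_eq_sum (X C : Matrix (Fin d) (Fin d) ℝ) :
    (X * C * Xᵀ).trace = ∑ i, X i ⬝ᵥ C *ᵥ X i := by
  simp only [Matrix.trace, Matrix.diag, Matrix.mul_apply, dotProduct, Matrix.mulVec,
    Matrix.transpose_apply, Finset.mul_sum, Finset.sum_mul]
  refine Finset.sum_congr rfl fun i _ => ?_
  rw [Finset.sum_comm]
  simp only [mul_assoc]

theorem trace_mul_mul_transpose_comm {C : Matrix (Fin d) (Fin d) ℝ} (hC : C.IsSymm)
    (X Y : Matrix (Fin d) (Fin d) ℝ) : (X * C * Yᵀ).trace = (Y * C * Xᵀ).trace := by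
  rw [← Matrix.trace_transpose]
  simp [Matrix.transpose_mul, hC.eq, Matrix.mul_assoc]

theorem trace_add_mul_mul_transpose_add {C : Matrix (Fin d) (Fin d) ℝ} (hC : C.IsSymm)
    (X Y : Matrix (Fin d) (Fin d) ℝ) :
    ((X + Y) * C * (X + Y)ᵀ).trace =
      (X * C * Xᵀ).trace + 2 * (X * C * Yᵀ).trace + (Y * C * Yᵀ).trace := by
  simp only [Matrix.add_mul, Matrix.mul_add, Matrix.transpose_add, Matrix.trace_add,
    trace_mul_mul_transpose_comm hC Y X]
  ring

end MatrixLemmas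

open Filter Topology in
theorem nonneg_of_forall_mul_add_sq_mul_nonneg {α β : ℝ}
    (h : ∀ t, 0 < t → t < 1 → 0 ≤ t * α + t ^ 2 * β) : 0 ≤ α := by
  have hlim : Tendsto (fun t => α + t * β) (𝓝[>] 0) (𝓝 α) := by
    have : Continuous fun t : ℝ => α + t * β := by fun_prop
    simpa using this.continuousWithinAt.tendsto (x := 0) (s := Set.Ioi 0)
  refine ge_of_tendsto hlim (Filter.mem_of_superset (Ioo_mem_nhdsGT one_pos) fun t ht => ?_)
  exact nonneg_of_mul_nonneg_right (by linarith [h t ht.1 ht.2]) ht.1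

section Lasso

variable {d : ℕ} {Chat eps A₀ : Matrix (Fin d) (Fin d) ℝ} {lam : ℝ}

theorem lassoObj_add_smul_sub_le (hC : Chat.IsSymm) (hlam : 0 ≤ lam)
    (X Y : Matrix (Fin d) (Fin d) ℝ) {t : ℝ} (ht0 : 0 ≤ t) (ht1 : t ≤ 1) :
    lassoObj Chat eps A₀ lam (X + t • (Y - X)) ≤ lassoObj Chat eps A₀ lam X +
      t * (((Y - X)ᵀ * eps).trace + ((X - A₀) * Chat * (Y - X)ᵀ).trace +
        lam * (matL1 Y - matL1 X)) + t ^ 2 * ((1 / 2) * ((Y - X) * Chat * (Y - X)ᵀ).trace) := by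
  have hL1 : matL1 (X + t • (Y - X)) ≤ (1 - t) * matL1 X + t * matL1 Y :=
    calc matL1 (X + t • (Y - X)) = matL1 ((1 - t) • X + t • Y) := by congr 1; module
      _ ≤ matL1 ((1 - t) • X) + matL1 (t • Y) := matL1_add_le _ _
      _ = (1 - t) * matL1 X + t * matL1 Y := by
        rw [matL1_smul, matL1_smul, abs_of_nonneg (by linarith), abs_of_nonneg ht0]
  have hlin : ((X + t • (Y - X))ᵀ * eps).trace = (Xᵀ * eps).trace + t * ((Y - X)ᵀ * eps).trace := by
    simp only [Matrix.transpose_add, Matrix.transpose_smul, Matrix.add_mul, Matrix.smul_mul,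
      Matrix.trace_add, Matrix.trace_smul, smul_eq_mul]
  have hquad : ((X + t • (Y - X) - A₀) * Chat * (X + t • (Y - X) - A₀)ᵀ).trace =
      ((X - A₀) * Chat * (X - A₀)ᵀ).trace + 2 * t * ((X - A₀) * Chat * (Y - X)ᵀ).trace +
        t ^ 2 * ((Y - X) * Chat * (Y - X)ᵀ).trace := by
    rw [show X + t • (Y - X) - A₀ = (X - A₀) + t • (Y - X) by abel,
      trace_add_mul_mul_transpose_add hC]
    simp only [Matrix.transpose_smul, Matrix.smul_mul, Matrix.mul_smul, Matrix.trace_smul,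
      smul_eq_mul]
    ring
  unfold lassoObj
  rw [hlin, hquad]
  nlinarith [mul_le_mul_of_nonneg_left hL1 hlam]

theorem lassoObj_first_order (hC : Chat.IsSymm) (hlam : 0 ≤ lam)
    {Ahat : Matrix (Fin d) (Fin d) ℝ}
    (hmin : ∀ A, lassoObj Chat eps A₀ lam Ahat ≤ lassoObj Chat eps A₀ lam A)
    (A : Matrix (Fin d) (Fin d) ℝ) :
    ((Ahat - A)ᵀ * eps).trace + ((Ahat - A₀) * Chat * (Ahat - A)ᵀ).trace ≤
      lam * (matL1 A - matL1 Ahat) := by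
  have hα : 0 ≤ ((A - Ahat)ᵀ * eps).trace + ((Ahat - A₀) * Chat * (A - Ahat)ᵀ).trace +
      lam * (matL1 A - matL1 Ahat) := nonneg_of_forall_mul_add_sq_mul_nonneg
      (β := (1 / 2) * ((A - Ahat) * Chat * (A - Ahat)ᵀ).trace) fun t ht0 ht1 => by
    have := lassoObj_add_smul_sub_le (eps := eps) (A₀ := A₀) hC hlam Ahat A ht0.le ht1.le
    linarith [hmin (Ahat + t • (A - Ahat))]
  rw [← neg_sub Ahat A] at hα
  simp only [Matrix.transpose_neg, Matrix.neg_mul, Matrix.mul_neg, Matrix.trace_neg] at hα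
  linarith

end Lasso

theorem rowSparse.card_filter_ne_zero_le {d s : ℕ} {A : Matrix (Fin d) (Fin d) ℝ}
    (h : rowSparse s A) (i : Fin d) : (Finset.univ.filter fun j => A i j ≠ 0).card ≤ s := by
  simpa only [Set.ncard_eq_toFinset_card', Set.toFinset_ofPred] using h i

theorem matrix_linear_sub_quadForm_le {d s : ℕ} (hsd : s ≤ d) {γ τ lam κ c₀ : ℝ} (hγ : 1 < γ)
    (hτ0 : 0 ≤ τ) (hτ : τ < γ - 1) (hlam : 0 < lam) (hκ : 0 < κ)
    (hc₀ : c₀ = (γ + τ + 1) / (γ - τ - 1))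
    {Chat : Matrix (Fin d) (Fin d) ℝ} (hC : Chat.PosSemidef)
    (hRE : ∀ u : Fin d → ℝ, inCone s c₀ u → κ ^ 2 * ∑ i, u i ^ 2 ≤ u ⬝ᵥ Chat *ᵥ u)
    (V : Matrix (Fin d) (Fin d) ℝ) {W : Matrix (Fin d) (Fin d) ℝ} (hW : rowSparse s W) :
    2 * (lam / γ) * (1 + τ) * matL1 (V - W) + 2 * lam * (matL1 W - matL1 V)
        - ((V - W) * Chat * (V - W)ᵀ).trace ≤
      ((1 + γ + τ) / (γ * κ)) ^ 2 * lam ^ 2 * d * s := by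
  have hrows := Finset.sum_le_sum fun i (_ : i ∈ Finset.univ) =>
    linear_sub_quadForm_le hsd hγ hτ0 hτ hlam hκ hc₀ hC hRE (v := V i)
      (hW.card_filter_ne_zero_le i) (fun j hj => by simpa using hj)
  rw [Finset.sum_const, Finset.card_univ, Fintype.card_fin, nsmul_eq_mul] at hrows
  calc _ = ∑ i, (2 * (lam / γ) * (1 + τ) * ∑ j, |V i j - W i j| + 2 * lam * ∑ j, (|W i j| - |V i j|)
          - (V i - W i) ⬝ᵥ Chat *ᵥ (V i - W i)) := by
        simp only [matL1, trace_mul_mul_transpose_eq_sum, Finset.sum_sub_distrib,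
          Finset.sum_add_distrib, ← Finset.mul_sum]
        rfl
    _ ≤ _ := hrows
    _ = _ := by ring

theorem stmt_7_general (d s : ℕ) (hsd : s ≤ d)
    (γ τ lam κ : ℝ) (hγ : 1 < γ) (hτ0 : 0 ≤ τ) (hτ : τ < γ - 1)
    (hlam : 0 < lam) (hκ : 0 < κ)
    (c₀ : ℝ) (hc₀ : c₀ = (γ + τ + 1) / (γ - τ - 1))
    (Chat eps : Matrix (Fin d) (Fin d) ℝ) (hC : Chat.PosSemidef)
    (hRE : ∀ u : Fin d → ℝ, inCone s c₀ u → κ ^ 2 * ∑ i, u i ^ 2 ≤ u ⬝ᵥ Chat *ᵥ u)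
    (heps : ∀ i j, |eps i j| ≤ lam / γ)
    (A₀ : Matrix (Fin d) (Fin d) ℝ)
    (Ahat : Matrix (Fin d) (Fin d) ℝ)
    (hmin : ∀ A : Matrix (Fin d) (Fin d) ℝ,
      lassoObj Chat eps A₀ lam Ahat ≤ lassoObj Chat eps A₀ lam A) :
    ∀ A : Matrix (Fin d) (Fin d) ℝ, rowSparse s A →
      2 * τ * γ⁻¹ * lam * matL1 (Ahat - A) + ((Ahat - A₀) * Chat * (Ahat - A₀)ᵀ).trace ≤
        ((A - A₀) * Chat * (A - A₀)ᵀ).trace +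
          ((1 + γ + τ) / (γ * κ)) ^ 2 * lam ^ 2 * d * s := by
  intro A hA
  have hsymm : Chat.IsSymm := isHermitian_iff_isSymm.mp hC.isHermitian
  have hoptimal := lassoObj_first_order hsymm hlam.le hmin A
  have hnoise := neg_trace_transpose_mul_le (X := Ahat - A) heps
  have hrows := matrix_linear_sub_quadForm_le hsd hγ hτ0 hτ hlam hκ hc₀ hC hRE Ahat hA
  have hexpand : ((A - A₀) * Chat * (A - A₀)ᵀ).trace = ((Ahat - A₀) * Chat * (Ahat - A₀)ᵀ).trace
      - 2 * ((Ahat - A₀) * Chat * (Ahat - A)ᵀ).trace + ((Ahat - A) * Chat * (Ahat - A)ᵀ).trace := by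
    rw [show A - A₀ = (Ahat - A₀) + -(Ahat - A) by abel, trace_add_mul_mul_transpose_add hsymm]
    simp only [Matrix.transpose_neg, Matrix.mul_neg, Matrix.neg_mul, neg_neg, Matrix.trace_neg]
    ring
  have hcoeff : 2 * τ * γ⁻¹ * lam = 2 * (lam / γ) * (1 + τ) - 2 * (lam / γ) := by ring
  rw [hexpand, hcoeff]
  linarith

/-- sharp oracle inequality for the Lasso. -/
theorem stmt_7 (d s : ℕ) (hd : 1 ≤ d) (hs : 1 ≤ s) (hsd : s ≤ d)
    (γ τ lam κ : ℝ) (hγ : 1 < γ) (hτ0 : 0 ≤ τ) (hτ : τ < γ - 1)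
    (hlam : 0 < lam) (hκ : 0 < κ)
    (c₀ : ℝ) (hc₀ : c₀ = (γ + τ + 1) / (γ - τ - 1))
    (Chat eps : Matrix (Fin d) (Fin d) ℝ) (hC : Chat.PosSemidef)
    (hRE : ∀ u : Fin d → ℝ, inCone s c₀ u → κ ^ 2 * ∑ i, u i ^ 2 ≤ u ⬝ᵥ Chat *ᵥ u)
    (heps : ∀ i j, |eps i j| ≤ lam / γ)
    (A₀ : Matrix (Fin d) (Fin d) ℝ) (hA₀ : rowSparse s A₀)
    (Ahat : Matrix (Fin d) (Fin d) ℝ)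
    (hmin : ∀ A : Matrix (Fin d) (Fin d) ℝ,
      lassoObj Chat eps A₀ lam Ahat ≤ lassoObj Chat eps A₀ lam A) :
    ∀ A : Matrix (Fin d) (Fin d) ℝ, rowSparse s A →
      2 * τ * γ⁻¹ * lam * matL1 (Ahat - A) + ((Ahat - A₀) * Chat * (Ahat - A₀)ᵀ).trace ≤
        ((A - A₀) * Chat * (A - A₀)ᵀ).trace +
          ((1 + γ + τ) / (γ * κ)) ^ 2 * lam ^ 2 * d * s :=
  stmt_7_general d s hsd γ τ lam κ hγ hτ0 hτ hlam hκ c₀ hc₀ Chat eps hC hRE heps A₀ Ahat hmin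
end

section
/- Let d ≥ 1, 1 ≤ s ≤ d, γ > 1, 0 < τ < γ − 1, λ > 0, κ > 0, and set c₀ = (γ+τ+1)/(γ−τ−1). Let Ĉ be a real d×d symmetric positive semidefinite matrix and ε a real d×d matrix such that: (i) for every u in the cone C(s,c₀), uᵀĈu ≥ κ²·‖u‖₂²; and (ii) every entry of ε has absolute value at most λ/γ. Let A₀ be a row-s-sparse d×d matrix and let Â be a minimizer over d×d matrices of L(A) = tr(Aᵀε) + ½·tr((A−A₀)Ĉ(A−A₀)ᵀ) + λ·|A|₁. Then |Â − A₀|₁ ≤ ((1+τ+γ)²/(2γτκ²))·λ·d·s. -/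
/-!
The objective splits over rows, so every row `v` of the minimizer does at least as well as the
corresponding row `a₀` of `A₀`. Comparing the two values with `u = v - a₀` and `S` the support of
`a₀` (so `|S| ≤ s`) gives the basic inequality
`½ uᵀĈu ≤ (λ/γ)|u|₁ + λ(|u_S|₁ - |u_Sᶜ|₁)`,
the second term coming from decomposability of the ℓ¹ norm over `S`. As `Ĉ ⪰ 0`, this forces
`|u|₁ ≤ (1 + c₀)|u_S|₁`, so `u` lies in the cone and `κ²‖u‖₂² ≤ uᵀĈu`. Combined with
`|u_S|₁² ≤ s‖u‖₂²` and AM–GM this bounds `|u|₁` by `(1+τ+γ)²λs/(2γτκ²)`; summing over the `d`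
rows gives the claim.
-/

open Matrix

open Finset

section TopEntries

variable {ι : Type*} [Fintype ι]

theorem exists_card_eq_top_and_sum_le (f : ι → ℝ) (hf : 0 ≤ f) {s : ℕ}
    (hs : s ≤ Fintype.card ι) :
    ∃ I : Finset ι, #I = s ∧ (∀ i ∈ I, ∀ j ∉ I, f j ≤ f i) ∧
      ∀ S : Finset ι, #S ≤ s → ∑ j ∈ S, f j ≤ ∑ i ∈ I, f i := by
  classical
  obtain ⟨I, hI, hmax⟩ := exists_max_image (univ.powersetCard s) (fun I => ∑ i ∈ I, f i)
    (powersetCard_nonempty.2 (by simpa using hs))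
  rw [mem_powersetCard_univ] at hI
  have hmax' (J : Finset ι) (hJ : #J = s) : ∑ i ∈ J, f i ≤ ∑ i ∈ I, f i :=
    hmax J (mem_powersetCard_univ.2 hJ)
  refine ⟨I, hI, fun i hi j hj => ?_, fun S hS => ?_⟩
  · -- otherwise swapping `i` for `j` would increase the sum
    by_contra! hij
    have hj' : j ∉ I.erase i := fun h => hj (mem_of_mem_erase h)
    have hswap := hmax' (insert j (I.erase i)) (by
      rw [card_insert_of_notMem hj', card_erase_of_mem hi, hI]
      have : 0 < s := hI ▸ card_pos.2 ⟨i, hi⟩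
      omega)
    rw [sum_insert hj', ← add_sum_erase I f hi] at hswap
    linarith
  · obtain ⟨T, hST, hT⟩ := exists_superset_card_eq hS (by simpa using hs)
    exact (sum_le_sum_of_subset_of_nonneg hST fun j _ _ => hf j).trans (hmax' T hT)

end TopEntries

theorem inCone_of_sum_abs_le {d s : ℕ} (hsd : s ≤ d) {c : ℝ} (hc : 0 ≤ 1 + c)
    {u : Fin d → ℝ} {S : Finset (Fin d)} (hS : #S ≤ s)
    (h : ∑ j, |u j| ≤ (1 + c) * ∑ j ∈ S, |u j|) : inCone s c u := by
  obtain ⟨I, hI, htop, hmax⟩ :=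
    exists_card_eq_top_and_sum_le (fun j => |u j|) (fun j => abs_nonneg (u j))
      (hsd.trans_eq (Fintype.card_fin d).symm)
  exact ⟨I, hI, htop, h.trans (mul_le_mul_of_nonneg_left (hmax S hS) hc)⟩

theorem le_of_sum_le_sum_update {ι β M : Type*} [Fintype ι] [DecidableEq ι]
    [AddCommMonoid M] [PartialOrder M] [IsOrderedCancelAddMonoid M]
    (f : ι → β → M) (x : ι → β) (i : ι) (y : β)
    (h : ∑ k, f k (x k) ≤ ∑ k, f k (Function.update x i y k)) : f i (x i) ≤ f i y := by
  have hsplit (z : β) :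
      ∑ k, f k (Function.update x i z k) = f i z + ∑ k ∈ univ.erase i, f k (x k) := by
    rw [← add_sum_erase _ _ (mem_univ i), Function.update_self]
    congr 1
    exact sum_congr rfl fun k hk => by rw [Function.update_of_ne (ne_of_mem_erase hk)]
  have hx := hsplit (x i)
  rw [Function.update_eq_self] at hx
  rw [hx, hsplit] at h
  exact le_of_add_le_add_right h

section Row

variable {n : Type*} [Fintype n]

noncomputable def rowObj (C : Matrix n n ℝ) (e a₀ : n → ℝ) (lam : ℝ) (v : n → ℝ) : ℝ :=
  v ⬝ᵥ e + 1 / 2 * ((v - a₀) ⬝ᵥ C *ᵥ (v - a₀)) + lam * ∑ j, |v j|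

theorem dotProduct_le_mul_sum_abs {e : n → ℝ} {μ : ℝ} (he : ∀ j, |e j| ≤ μ) (w : n → ℝ) :
    w ⬝ᵥ e ≤ μ * ∑ j, |w j| := by
  rw [mul_sum]
  refine sum_le_sum fun j _ => ?_
  calc w j * e j ≤ |w j| * |e j| := (le_abs_self _).trans (abs_mul _ _).le
    _ ≤ |w j| * μ := mul_le_mul_of_nonneg_left (he j) (abs_nonneg _)
    _ = μ * |w j| := mul_comm _ _

variable [DecidableEq n]

theorem sum_abs_sub_sum_abs_le_s9 {a₀ : n → ℝ} {S : Finset n} (hS : ∀ j ∉ S, a₀ j = 0)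
    (v : n → ℝ) :
    ∑ j, |a₀ j| - ∑ j, |v j| ≤ ∑ j ∈ S, |v j - a₀ j| - ∑ j ∈ Sᶜ, |v j - a₀ j| := by
  calc ∑ j, |a₀ j| - ∑ j, |v j|
      = ∑ j ∈ S, (|a₀ j| - |v j|) + ∑ j ∈ Sᶜ, (|a₀ j| - |v j|) := by
        rw [sum_add_sum_compl, sum_sub_distrib]
    _ ≤ ∑ j ∈ S, |v j - a₀ j| + ∑ j ∈ Sᶜ, -|v j - a₀ j| := by
        gcongr with j _ j hj
        · exact abs_sub_comm (v j) (a₀ j) ▸ abs_sub_abs_le_abs_sub _ _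
        · rw [hS j (mem_compl.1 hj)]
          simp
    _ = _ := by rw [sum_neg_distrib, sub_eq_add_neg]

theorem rowObj_basic_inequality (C : Matrix n n ℝ) {e a₀ v : n → ℝ} {lam μ : ℝ}
    (hlam : 0 ≤ lam) (he : ∀ j, |e j| ≤ μ) {S : Finset n} (hS : ∀ j ∉ S, a₀ j = 0)
    (hmin : rowObj C e a₀ lam v ≤ rowObj C e a₀ lam a₀) :
    1 / 2 * ((v - a₀) ⬝ᵥ C *ᵥ (v - a₀)) ≤
      μ * ∑ j, |v j - a₀ j| +
        lam * (∑ j ∈ S, |v j - a₀ j| - ∑ j ∈ Sᶜ, |v j - a₀ j|) := by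
  have hnoise : (a₀ - v) ⬝ᵥ e ≤ μ * ∑ j, |v j - a₀ j| := by
    simpa only [Pi.sub_apply, abs_sub_comm] using dotProduct_le_mul_sum_abs he (a₀ - v)
  have hpen := mul_le_mul_of_nonneg_left (sum_abs_sub_sum_abs_le_s9 hS v) hlam
  simp only [rowObj, sub_self, zero_dotProduct, mul_zero, add_zero] at hmin
  rw [sub_dotProduct] at hnoise
  linarith

end Row

theorem lassoObj_eq_sum_rowObj {d : ℕ} (C eps A₀ A : Matrix (Fin d) (Fin d) ℝ) (lam : ℝ) :
    lassoObj C eps A₀ lam A = ∑ i, rowObj C (eps i) (A₀ i) lam (A i) := by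
  have htr (M N : Matrix (Fin d) (Fin d) ℝ) : (M * Nᵀ).trace = ∑ i, M i ⬝ᵥ N i := rfl
  have h1 : (Aᵀ * eps).trace = ∑ i, A i ⬝ᵥ eps i := by
    rw [trace_mul_comm, htr]
    exact sum_congr rfl fun i _ => dotProduct_comm _ _
  have h2 : ((A - A₀) * C * (A - A₀)ᵀ).trace = ∑ i, (A i - A₀ i) ⬝ᵥ C *ᵥ (A i - A₀ i) := by
    rw [htr]
    refine sum_congr rfl fun i _ => ?_
    change (A i - A₀ i) ᵥ* C ⬝ᵥ (A i - A₀ i) = _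
    rw [← dotProduct_mulVec]
  simp only [lassoObj, rowObj, matL1, h1, h2, sum_add_distrib, mul_sum]

section Arithmetic

variable {γ τ lam κ a b s Q T : ℝ}

theorem add_le_one_add_mul_of_basic_inequality (hτ0 : 0 < τ) (hτ : τ < γ - 1) (hlam : 0 < lam)
    (ha : 0 ≤ a) (hb : 0 ≤ b) (hQ : 0 ≤ Q)
    (hbasic : 1 / 2 * Q ≤ lam / γ * (a + b) + lam * (a - b)) :
    a + b ≤ (1 + (γ + τ + 1) / (γ - τ - 1)) * a := by
  have hγ : 0 < γ := by linarith
  have hγτ : 0 < γ - τ - 1 := by linarith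
  have h : lam * ((γ - 1) * (a + b)) ≤ lam * (2 * γ * a) := by
    have := mul_le_mul_of_nonneg_left hbasic hγ.le
    field_simp at this
    nlinarith
  have h' := le_of_mul_le_mul_left h hlam
  rw [one_add_div hγτ.ne', div_mul_eq_mul_div, le_div_iff₀ hγτ]
  nlinarith

theorem add_le_of_basic_inequality (hτ0 : 0 < τ) (hτ : τ ≤ γ - 1) (hlam : 0 < lam) (hκ : 0 < κ)
    (hb : 0 ≤ b) (hs : 0 ≤ s) (hT : 0 ≤ T)
    (hbasic : 1 / 2 * Q ≤ lam / γ * (a + b) + lam * (a - b)) (hRE : κ ^ 2 * T ≤ Q)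
    (hCS : a ^ 2 ≤ s * T) :
    a + b ≤ (1 + τ + γ) ^ 2 / (2 * γ * τ * κ ^ 2) * lam * s := by
  have hγ : 0 < γ := by linarith
  set K := lam * (1 + τ + γ)
  have hK : 0 < K := by positivity
  have hslack : lam * τ * (a + b) ≤ K * a - γ * κ ^ 2 * T / 2 := by
    have := mul_le_mul_of_nonneg_left hbasic hγ.le
    field_simp at this
    nlinarith [mul_nonneg hlam.le (mul_nonneg (sub_nonneg.2 hτ) hb)]
  -- AM-GM, balanced so that the quadratic term cancels the one in `hslack`
  have hamgm : 2 * a ≤ γ * κ ^ 2 * T / K + K * s / (γ * κ ^ 2) := by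
    refine two_mul_le_add_of_sq_le_mul (by positivity) (by positivity) (hCS.trans_eq ?_)
    field_simp
  have hKa : K * a ≤ γ * κ ^ 2 * T / 2 + K ^ 2 * s / (2 * γ * κ ^ 2) := by
    have := mul_le_mul_of_nonneg_left hamgm hK.le
    field_simp at this ⊢
    linarith
  have hbound : (1 + τ + γ) ^ 2 / (2 * γ * τ * κ ^ 2) * lam * s
      = K ^ 2 * s / (2 * γ * κ ^ 2) / (lam * τ) := by
    field_simp
    ring
  rw [hbound, le_div_iff₀ (by positivity)]
  linarith

end Arithmetic

theorem rowObj_le_of_forall_lassoObj_le {d : ℕ} {C eps A₀ Ahat : Matrix (Fin d) (Fin d) ℝ}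
    {lam : ℝ} (hmin : ∀ A, lassoObj C eps A₀ lam Ahat ≤ lassoObj C eps A₀ lam A)
    (i : Fin d) (w : Fin d → ℝ) :
    rowObj C (eps i) (A₀ i) lam (Ahat i) ≤ rowObj C (eps i) (A₀ i) lam w := by
  have h := hmin (updateRow Ahat i w)
  rw [lassoObj_eq_sum_rowObj, lassoObj_eq_sum_rowObj] at h
  exact le_of_sum_le_sum_update (fun k => rowObj C (eps k) (A₀ k) lam) Ahat i w h

theorem sum_abs_sub_le_of_rowObj_le {d s : ℕ} (hsd : s ≤ d) {γ τ lam κ : ℝ} (hτ0 : 0 < τ)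
    (hτ : τ < γ - 1) (hlam : 0 < lam) (hκ : 0 < κ) {C : Matrix (Fin d) (Fin d) ℝ}
    (hC : C.PosSemidef)
    (hRE : ∀ u, inCone s ((γ + τ + 1) / (γ - τ - 1)) u → κ ^ 2 * ∑ i, u i ^ 2 ≤ u ⬝ᵥ C *ᵥ u)
    {e a₀ v : Fin d → ℝ} (he : ∀ j, |e j| ≤ lam / γ) (ha₀ : #{j | a₀ j ≠ 0} ≤ s)
    (hmin : rowObj C e a₀ lam v ≤ rowObj C e a₀ lam a₀) :
    ∑ j, |v j - a₀ j| ≤ (1 + τ + γ) ^ 2 / (2 * γ * τ * κ ^ 2) * lam * s := by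
  set S : Finset (Fin d) := {j | a₀ j ≠ 0}
  have hS : ∀ j ∉ S, a₀ j = 0 := by simp [S]
  set u := v - a₀
  have hsplit : ∑ j, |u j| = ∑ j ∈ S, |u j| + ∑ j ∈ Sᶜ, |u j| := (sum_add_sum_compl S _).symm
  have hbasic := rowObj_basic_inequality C hlam.le he hS hmin
  change _ ≤ lam / γ * ∑ j, |u j| + lam * (∑ j ∈ S, |u j| - ∑ j ∈ Sᶜ, |u j|) at hbasic
  rw [hsplit] at hbasic
  have hγτ : 0 ≤ 1 + (γ + τ + 1) / (γ - τ - 1) :=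
    add_nonneg zero_le_one (div_nonneg (by linarith) (by linarith))
  have hcone : inCone s ((γ + τ + 1) / (γ - τ - 1)) u :=
    inCone_of_sum_abs_le hsd hγτ ha₀ (hsplit ▸ add_le_one_add_mul_of_basic_inequality hτ0 hτ
      hlam (sum_nonneg fun _ _ => abs_nonneg _) (sum_nonneg fun _ _ => abs_nonneg _)
      (hC.dotProduct_mulVec_nonneg u) hbasic)
  have hCS : (∑ j ∈ S, |u j|) ^ 2 ≤ s * ∑ j, u j ^ 2 := by
    refine sq_sum_le_card_mul_sum_sq.trans (mul_le_mul (by exact_mod_cast ha₀) ?_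
      (sum_nonneg fun _ _ => sq_nonneg _) (Nat.cast_nonneg s))
    simp only [sq_abs]
    exact sum_le_sum_of_subset_of_nonneg (subset_univ S) fun j _ _ => sq_nonneg (u j)
  change ∑ j, |u j| ≤ _
  rw [hsplit]
  exact add_le_of_basic_inequality hτ0 hτ.le hlam hκ (sum_nonneg fun _ _ => abs_nonneg _)
    (Nat.cast_nonneg s) (sum_nonneg fun _ _ => sq_nonneg _) hbasic (hRE u hcone) hCS

theorem stmt_9_general (d s : ℕ) (hsd : s ≤ d)
    (γ τ lam κ : ℝ) (hτ0 : 0 < τ) (hτ : τ < γ - 1)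
    (hlam : 0 < lam) (hκ : 0 < κ)
    (c₀ : ℝ) (hc₀ : c₀ = (γ + τ + 1) / (γ - τ - 1))
    (Chat eps : Matrix (Fin d) (Fin d) ℝ) (hC : Chat.PosSemidef)
    (hRE : ∀ u : Fin d → ℝ, inCone s c₀ u → κ ^ 2 * ∑ i, u i ^ 2 ≤ u ⬝ᵥ Chat *ᵥ u)
    (heps : ∀ i j, |eps i j| ≤ lam / γ)
    (A₀ : Matrix (Fin d) (Fin d) ℝ) (hA₀ : rowSparse s A₀)
    (Ahat : Matrix (Fin d) (Fin d) ℝ)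
    (hmin : ∀ A : Matrix (Fin d) (Fin d) ℝ,
      lassoObj Chat eps A₀ lam Ahat ≤ lassoObj Chat eps A₀ lam A) :
    matL1 (Ahat - A₀) ≤ (1 + τ + γ) ^ 2 / (2 * γ * τ * κ ^ 2) * lam * d * s := by
  subst hc₀
  have hrow (i : Fin d) :
      ∑ j, |Ahat i j - A₀ i j| ≤ (1 + τ + γ) ^ 2 / (2 * γ * τ * κ ^ 2) * lam * s := by
    refine sum_abs_sub_le_of_rowObj_le hsd hτ0 hτ hlam hκ hC hRE (heps i) ?_
      (rowObj_le_of_forall_lassoObj_le hmin i (A₀ i))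
    simpa only [Set.ncard_eq_toFinset_card', Set.toFinset_ofPred] using hA₀ i
  calc matL1 (Ahat - A₀) = ∑ i, ∑ j, |Ahat i j - A₀ i j| := rfl
    _ ≤ ∑ _i : Fin d, (1 + τ + γ) ^ 2 / (2 * γ * τ * κ ^ 2) * lam * s :=
      sum_le_sum fun i _ => hrow i
    _ = _ := by
      rw [sum_const, card_univ, Fintype.card_fin, nsmul_eq_mul]
      ring

/-- ℓ¹ error bound for the Lasso. -/
theorem stmt_9 (d s : ℕ) (hd : 1 ≤ d) (hs : 1 ≤ s) (hsd : s ≤ d)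
    (γ τ lam κ : ℝ) (hγ : 1 < γ) (hτ0 : 0 < τ) (hτ : τ < γ - 1)
    (hlam : 0 < lam) (hκ : 0 < κ)
    (c₀ : ℝ) (hc₀ : c₀ = (γ + τ + 1) / (γ - τ - 1))
    (Chat eps : Matrix (Fin d) (Fin d) ℝ) (hC : Chat.PosSemidef)
    (hRE : ∀ u : Fin d → ℝ, inCone s c₀ u → κ ^ 2 * ∑ i, u i ^ 2 ≤ u ⬝ᵥ Chat *ᵥ u)
    (heps : ∀ i j, |eps i j| ≤ lam / γ)
    (A₀ : Matrix (Fin d) (Fin d) ℝ) (hA₀ : rowSparse s A₀)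
    (Ahat : Matrix (Fin d) (Fin d) ℝ)
    (hmin : ∀ A : Matrix (Fin d) (Fin d) ℝ,
      lassoObj Chat eps A₀ lam Ahat ≤ lassoObj Chat eps A₀ lam A) :
    matL1 (Ahat - A₀) ≤ (1 + τ + γ) ^ 2 / (2 * γ * τ * κ ^ 2) * lam * d * s :=
  stmt_9_general d s hsd γ τ lam κ hτ0 hτ hlam hκ c₀ hc₀ Chat eps hC hRE heps A₀ hA₀ Ahat hmin
end

section
/- Let (Ω, F, P) be a probability space and C : Ω → (real d×d symmetric matrices) a measurable random matrix. Let 1 ≤ s ≤ d, R ≥ 0 and p ≥ 0 be such that for every vector u ∈ ℝᵈ with at most s nonzero entries and ‖u‖₂ ≤ 1, P(|uᵀCu| ≥ R) ≤ p. Then P( sup_{u ∈ K(s), ‖u‖₂ ≤ 1} |uᵀCu| ≥ 3R ) ≤ 21^s · min(d^s, (e·d/s)^s) · p, where K(s) = {u ∈ ℝᵈ : u has at most s nonzero entries}. -/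
/-!
Split the sparse unit vectors into the unit balls of the `C(d, s)` coordinate subspaces spanned
by `s` coordinates, and take a `1/3`-net of at most `7 ^ s` points in each (volume comparison).
Let `Q u = uᵀ A u` and let `M` be the largest value of `|Q|` on the ball of one such subspace.
Polarization gives `|polar Q x y| ≤ 2 M ‖x‖ ‖y‖` on that subspace, and
`Q u - Q v = polar Q (u - v) (u + v) / 2`, so `|Q u - Q v| ≤ 2 M / 3` whenever `v` is a net point
of the same subspace near `u`; at a maximizer `u` this gives `M ≤ 3 max_v |Q v|`. Hence the event
of the theorem is contained in the union of the events `R ≤ |vᵀ C v|` over the `C(d, s) 7 ^ s`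
net points `v`, and a union bound with `C(d, s) ≤ min (d ^ s) ((e d / s) ^ s)` concludes.
-/

open Matrix MeasureTheory
open Metric Module
open scoped NNReal ENNReal Nat

namespace QuadraticMap

variable {R M N : Type*} [CommRing R] [AddCommGroup M] [Module R M] [AddCommGroup N] [Module R N]

theorem two_smul_sub_eq_polar (Q : QuadraticMap R M N) (u v : M) :
    2 • (Q u - Q v) = polar Q (u - v) (u + v) := by
  rw [polar_sub_left, polar_add_right, polar_add_right, polar_self, polar_self,
    polar_comm Q v u, smul_sub]
  abel

end QuadraticMap

section QuadraticBounds

variable {E : Type*} [NormedAddCommGroup E]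

theorem QuadraticMap.abs_le_mul_norm_sq [NormedSpace ℝ E] (Q : QuadraticMap ℝ E ℝ)
    {V : Submodule ℝ E} {M : ℝ}
    (hM : ∀ x ∈ V, ‖x‖ ≤ 1 → |Q x| ≤ M) {x : E} (hx : x ∈ V) :
    |Q x| ≤ M * ‖x‖ ^ 2 := by
  rcases eq_or_ne x 0 with rfl | hx0
  · simp
  have hnorm : 0 < ‖x‖ := norm_pos_iff.mpr hx0
  have hunit := hM (‖x‖⁻¹ • x) (V.smul_mem _ hx) (by
    rw [norm_smul, norm_inv, norm_norm, inv_mul_cancel₀ hnorm.ne'])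
  rw [Q.map_smul, smul_eq_mul, abs_mul, abs_of_pos (by positivity)] at hunit
  calc |Q x| = ‖x‖ ^ 2 * (‖x‖⁻¹ * ‖x‖⁻¹ * |Q x|) := by field_simp
    _ ≤ ‖x‖ ^ 2 * M := by gcongr
    _ = M * ‖x‖ ^ 2 := mul_comm _ _

variable [InnerProductSpace ℝ E] (Q : QuadraticMap ℝ E ℝ) {V : Submodule ℝ E} {M : ℝ}

theorem QuadraticMap.abs_polar_le_mul_add
    (hM : ∀ x ∈ V, ‖x‖ ≤ 1 → |Q x| ≤ M) {x y : E} (hx : x ∈ V) (hy : y ∈ V) :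
    |polar Q x y| ≤ M * (‖x‖ ^ 2 + ‖y‖ ^ 2) := by
  have hpolar := Q.two_smul_sub_eq_polar (x + y) (x - y)
  rw [show x + y - (x - y) = (2 : ℝ) • y by module, show x + y + (x - y) = (2 : ℝ) • x by module,
    polar_smul_left, polar_smul_right, polar_comm, two_nsmul, smul_eq_mul, smul_eq_mul] at hpolar
  have hplus := Q.abs_le_mul_norm_sq hM (V.add_mem hx hy)
  have hminus := Q.abs_le_mul_norm_sq hM (V.sub_mem hx hy)
  have hpar : M * ‖x + y‖ ^ 2 + M * ‖x - y‖ ^ 2 = 2 * (M * (‖x‖ ^ 2 + ‖y‖ ^ 2)) := by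
    rw [← mul_add, parallelogram_law_with_norm ℝ x y]
    ring
  rw [abs_le] at hplus hminus ⊢
  constructor <;> linarith

theorem QuadraticMap.abs_polar_le_two_mul
    (hM : ∀ x ∈ V, ‖x‖ ≤ 1 → |Q x| ≤ M) {x y : E} (hx : x ∈ V) (hy : y ∈ V) :
    |polar Q x y| ≤ 2 * M * (‖x‖ * ‖y‖) := by
  rcases eq_or_ne x 0 with rfl | hx0
  · simp [polar_zero_left]
  rcases eq_or_ne y 0 with rfl | hy0
  · simp [polar_zero_right]
  have hxn : 0 < ‖x‖ := norm_pos_iff.mpr hx0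
  have hyn : 0 < ‖y‖ := norm_pos_iff.mpr hy0
  have hunit := Q.abs_polar_le_mul_add hM (V.smul_mem ‖x‖⁻¹ hx) (V.smul_mem ‖y‖⁻¹ hy)
  rw [polar_smul_left, polar_smul_right, smul_eq_mul, smul_eq_mul, abs_mul, abs_mul,
    norm_smul, norm_smul, norm_inv, norm_inv, norm_norm, norm_norm,
    inv_mul_cancel₀ hxn.ne', inv_mul_cancel₀ hyn.ne', abs_inv, abs_inv, abs_norm, abs_norm] at hunit
  calc |polar Q x y| = ‖x‖ * ‖y‖ * (‖x‖⁻¹ * (‖y‖⁻¹ * |polar Q x y|)) := by field_simp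
    _ ≤ ‖x‖ * ‖y‖ * (M * (1 ^ 2 + 1 ^ 2)) := by gcongr
    _ = 2 * M * (‖x‖ * ‖y‖) := by ring

theorem QuadraticMap.one_sub_two_mul_abs_le_of_net [FiniteDimensional ℝ E] (hQ : Continuous Q)
    {N : Set E} {ε G : ℝ} (hNV : N ⊆ V) (hN : ∀ v ∈ N, ‖v‖ ≤ 1 ∧ |Q v| ≤ G)
    (hnet : ∀ u ∈ V, ‖u‖ ≤ 1 → ∃ v ∈ N, ‖u - v‖ ≤ ε) {u : E} (hu : u ∈ V) (hu1 : ‖u‖ ≤ 1) :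
    (1 - 2 * ε) * |Q u| ≤ G := by
  have hK : IsCompact ((V : Set E) ∩ closedBall 0 1) :=
    (isCompact_closedBall 0 1).inter_left V.closed_of_finiteDimensional
  obtain ⟨w, ⟨hwV, hw1⟩, hwmax⟩ := hK.exists_isMaxOn ⟨0, V.zero_mem, by simp⟩
    (continuous_abs.comp hQ).continuousOn
  rw [mem_closedBall_zero_iff] at hw1
  have hM : ∀ x ∈ V, ‖x‖ ≤ 1 → |Q x| ≤ |Q w| := fun x hx hx1 ↦
    hwmax ⟨hx, mem_closedBall_zero_iff.mpr hx1⟩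
  obtain ⟨v, hvN, hwv⟩ := hnet w hwV hw1
  obtain ⟨hv1, hvG⟩ := hN v hvN
  -- `Q w - Q v` is half the polar form of `w - v` and `w + v`, whose norms are `≤ ε` and `≤ 2`.
  have happrox : |Q w - Q v| ≤ 2 * ε * |Q w| := by
    have hpolar := Q.abs_polar_le_two_mul hM (V.sub_mem hwV (hNV hvN)) (V.add_mem hwV (hNV hvN))
    rw [← Q.two_smul_sub_eq_polar, two_nsmul, ← two_mul, abs_mul, abs_two] at hpolar
    have hsum : ‖w + v‖ ≤ 2 := (norm_add_le w v).trans (by linarith)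
    have hprod : ‖w - v‖ * ‖w + v‖ ≤ ε * 2 := by gcongr; exact (norm_nonneg _).trans hwv
    nlinarith [abs_nonneg (Q w)]
  have hwG : (1 - 2 * ε) * |Q w| ≤ G := by
    linarith [abs_sub_abs_le_abs_sub (Q w) (Q v)]
  rcases le_total 0 (1 - 2 * ε) with hε | hε
  · exact (mul_le_mul_of_nonneg_left (hM u hu hu1) hε).trans hwG
  · exact (mul_nonpos_of_nonpos_of_nonneg hε (abs_nonneg _)).trans ((abs_nonneg _).trans hvG)

end QuadraticBounds

section Packing

variable {E : Type*} [NormedAddCommGroup E] [NormedSpace ℝ E] [FiniteDimensional ℝ E] {ε : ℝ≥0}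

theorem card_le_of_isSeparated_closedBall (hε : 0 < ε) {T : Finset E}
    (hTB : (T : Set E) ⊆ closedBall 0 1) (hT : IsSeparated ε (T : Set E)) :
    (T.card : ℝ) ≤ (1 + 2 / ε) ^ finrank ℝ E := by
  borelize E
  set μ : Measure E := Measure.addHaar
  have hr : (0 : ℝ) < ε / 2 := by positivity
  have hdisj : (T : Set E).PairwiseDisjoint (ball · (ε / 2)) := by
    intro x hx y hy hxy
    refine ball_disjoint_ball ?_
    have hsep : (ε : ℝ≥0∞) < edist x y := hT hx hy hxy
    rw [edist_nndist, ENNReal.coe_lt_coe, ← NNReal.coe_lt_coe, coe_nndist] at hsep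
    linarith
  have hsub : ⋃ x ∈ T, ball x (ε / 2) ⊆ ball 0 (1 + ε / 2) := by
    simp only [Set.iUnion_subset_iff]
    intro x hx
    refine ball_subset_ball' ?_
    linarith [mem_closedBall_zero_iff.mp (hTB hx), dist_zero_right x]
  have hvol : (T.card : ℝ≥0∞) * ENNReal.ofReal ((ε / 2) ^ finrank ℝ E) * μ (ball 0 1)
      ≤ ENNReal.ofReal ((1 + ε / 2) ^ finrank ℝ E) * μ (ball 0 1) := by
    calc (T.card : ℝ≥0∞) * ENNReal.ofReal ((ε / 2) ^ finrank ℝ E) * μ (ball 0 1)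
        = ∑ x ∈ T, μ (ball x (ε / 2)) := by
          simp [μ.addHaar_ball_of_pos _ hr, mul_assoc]
      _ = μ (⋃ x ∈ T, ball x (ε / 2)) :=
          (measure_biUnion_finset hdisj fun _ _ ↦ measurableSet_ball).symm
      _ ≤ μ (ball 0 (1 + ε / 2)) := measure_mono hsub
      _ = _ := μ.addHaar_ball_of_pos _ (by positivity)
  rw [ENNReal.mul_le_mul_iff_left (measure_ball_pos μ 0 one_pos).ne' measure_ball_lt_top.ne,
    ← ENNReal.ofReal_natCast, ← ENNReal.ofReal_mul (by positivity),
    ENNReal.ofReal_le_ofReal_iff (by positivity)] at hvol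
  calc (T.card : ℝ) = T.card * (ε / 2) ^ finrank ℝ E / (ε / 2) ^ finrank ℝ E := by field_simp
    _ ≤ (1 + ε / 2) ^ finrank ℝ E / (ε / 2) ^ finrank ℝ E := by gcongr
    _ = (1 + 2 / ε) ^ finrank ℝ E := by rw [← div_pow]; congr 1; field_simp; ring

theorem exists_finset_isCover_closedBall (hε : 0 < ε) :
    ∃ N : Finset E, (N : Set E) ⊆ closedBall 0 1 ∧ (N.card : ℝ) ≤ (1 + 2 / ε) ^ finrank ℝ E ∧
      IsCover ε (closedBall 0 1) (N : Set E) := by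
  classical
  set cards : Set ℕ := {k | ∃ T : Finset E, (T : Set E) ⊆ closedBall 0 1 ∧
    IsSeparated ε (T : Set E) ∧ T.card = k}
  have hbdd : BddAbove cards := ⟨⌊(1 + 2 / (ε : ℝ)) ^ finrank ℝ E⌋₊, by
    rintro _ ⟨T, hTB, hT, rfl⟩
    exact Nat.le_floor (card_le_of_isSeparated_closedBall hε hTB hT)⟩
  obtain ⟨T, hTB, hT, hTmax⟩ : sSup cards ∈ cards :=
    Nat.sSup_mem ⟨0, ∅, by simp, by simp, rfl⟩ hbdd
  refine ⟨T, hTB, card_le_of_isSeparated_closedBall hε hTB hT,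
    IsCover.of_maximal_isSeparated ⟨⟨hTB, hT⟩, fun N ⟨hNB, hN⟩ hTN x hxN ↦ ?_⟩⟩
  by_contra hxT
  have hins : (insert x T).card ∈ cards :=
    ⟨insert x T, by simpa using Set.insert_subset (hNB hxN) hTB,
      hN.subset (by simpa using Set.insert_subset hxN hTN), rfl⟩
  have := le_csSup hbdd hins
  rw [Finset.card_insert_of_notMem hxT, hTmax] at this
  omega

end Packing

theorem Nat.choose_le_exp_mul_div_pow (n k : ℕ) : (n.choose k : ℝ) ≤ (Real.exp 1 * n / k) ^ k := by
  rcases k.eq_zero_or_pos with rfl | hk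
  · simp
  have hfac : (0 : ℝ) < k ! := by positivity
  -- `k ^ k / k! ≤ e ^ k` is one term of the series of `exp k`.
  have hkk : (k : ℝ) ^ k ≤ Real.exp 1 ^ k * k ! := by
    rw [← div_le_iff₀ hfac, ← Real.exp_nat_mul, mul_one]
    exact Real.pow_div_factorial_le_exp _ k.cast_nonneg k
  rw [div_pow, mul_pow, le_div_iff₀ (by positivity)]
  calc (n.choose k : ℝ) * k ^ k ≤ n ^ k / k ! * (Real.exp 1 ^ k * k !) := by
        gcongr
        exact Nat.choose_le_pow_div k n
    _ = Real.exp 1 ^ k * n ^ k := by field_simp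

theorem Nat.choose_le_min_pow (n k : ℕ) :
    (n.choose k : ℝ) ≤ min ((n : ℝ) ^ k) ((Real.exp 1 * n / k) ^ k) :=
  le_min (mod_cast n.choose_le_pow k) (n.choose_le_exp_mul_div_pow k)

section Sparse

variable {ι : Type*}

def supportedOn (S : Finset ι) : Submodule ℝ (EuclideanSpace ℝ ι) where
  carrier := {x | ∀ i ∉ S, x i = 0}
  add_mem' hx hy i hi := by simp [hx i hi, hy i hi]
  zero_mem' _ _ := rfl
  smul_mem' c x hx i hi := by simp [hx i hi]

theorem mem_supportedOn {S : Finset ι} {x : EuclideanSpace ℝ ι} :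
    x ∈ supportedOn S ↔ Function.support x ⊆ S :=
  Function.support_subset_iff'.symm

theorem finrank_supportedOn_le [Fintype ι] (S : Finset ι) : finrank ℝ (supportedOn S) ≤ S.card := by
  let restrict : supportedOn S →ₗ[ℝ] (S → ℝ) :=
    LinearMap.pi (fun i : S ↦ (EuclideanSpace.proj (i : ι)).toLinearMap ∘ₗ (supportedOn S).subtype)
  have hinj : Function.Injective restrict := by
    intro x y hxy
    ext i
    by_cases hi : i ∈ S
    · exact congrFun hxy ⟨i, hi⟩
    · rw [x.2 i hi, y.2 i hi]
  simpa using LinearMap.finrank_le_finrank_of_injective hinj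

theorem ncard_support_le_of_mem_supportedOn {S : Finset ι} {x : EuclideanSpace ℝ ι}
    (hx : x ∈ supportedOn S) : (Function.support x).ncard ≤ S.card := by
  simpa using Set.ncard_le_ncard (mem_supportedOn.mp hx)

theorem exists_mem_supportedOn_of_ncard_support_le [Fintype ι] {s : ℕ} (hs : s ≤ Fintype.card ι)
    {x : EuclideanSpace ℝ ι} (hx : (Function.support x).ncard ≤ s) :
    ∃ S : Finset ι, S.card = s ∧ x ∈ supportedOn S := by
  classical
  have hfin := (Function.support x).toFinite
  obtain ⟨S, hxS, -, hS⟩ := Finset.exists_subsuperset_card_eq (n := s)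
    (Finset.subset_univ hfin.toFinset) (by rwa [← Set.ncard_eq_toFinset_card _ hfin]) (by simpa using hs)
  exact ⟨S, hS, mem_supportedOn.mpr (by simpa using hxS)⟩

/-- Net points approximate within the same coordinate subspace, so that `u ± v` stay in it. -/
structure IsSparseNet [Fintype ι] (s : ℕ) (ε : ℝ) (𝒩 : Finset (EuclideanSpace ℝ ι)) : Prop where
  norm_le_one : ∀ v ∈ 𝒩, ‖v‖ ≤ 1
  ncard_support_le : ∀ v ∈ 𝒩, (Function.support v).ncard ≤ s
  exists_norm_sub_le : ∀ S : Finset ι, S.card = s → ∀ u ∈ supportedOn S, ‖u‖ ≤ 1 →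
    ∃ v ∈ 𝒩, v ∈ supportedOn S ∧ ‖u - v‖ ≤ ε

theorem exists_finset_supportedOn_net [Fintype ι] (S : Finset ι) {ε : ℝ} (hε : 0 < ε) :
    ∃ N : Finset (EuclideanSpace ℝ ι), (N.card : ℝ) ≤ (1 + 2 / ε) ^ S.card ∧
      (∀ v ∈ N, v ∈ supportedOn S ∧ ‖v‖ ≤ 1) ∧
      ∀ u ∈ supportedOn S, ‖u‖ ≤ 1 → ∃ v ∈ N, ‖u - v‖ ≤ ε := by
  obtain ⟨N, hNB, hNcard, hNcover⟩ :=
    exists_finset_isCover_closedBall (E := supportedOn S) (Real.toNNReal_pos.mpr hε)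
  rw [Real.coe_toNNReal _ hε.le] at hNcard
  refine ⟨N.map (Function.Embedding.subtype _), ?_, ?_, fun u hu hu1 ↦ ?_⟩
  · rw [Finset.card_map]
    exact hNcard.trans (pow_le_pow_right₀ (by simp; positivity) (finrank_supportedOn_le S))
  · simp only [Finset.mem_map, Function.Embedding.coe_subtype]
    rintro _ ⟨w, hw, rfl⟩
    exact ⟨w.2, by simpa using hNB hw⟩
  · have hcover := hNcover.subset_iUnion_closedBall
      (show (⟨u, hu⟩ : supportedOn S) ∈ closedBall 0 1 by simpa using hu1)
    simp only [Set.mem_iUnion, Finset.mem_coe] at hcover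
    obtain ⟨w, hw, hdist⟩ := hcover
    refine ⟨w, Finset.mem_map_of_mem _ hw, ?_⟩
    simpa [dist_eq_norm, Real.coe_toNNReal _ hε.le] using hdist

theorem exists_isSparseNet [Fintype ι] (s : ℕ) {ε : ℝ} (hε : 0 < ε) :
    ∃ 𝒩 : Finset (EuclideanSpace ℝ ι), IsSparseNet s ε 𝒩 ∧
      (𝒩.card : ℝ) ≤ (Fintype.card ι).choose s * (1 + 2 / ε) ^ s := by
  classical
  choose N hNcard hNmem hNnet using fun S : Finset ι ↦ exists_finset_supportedOn_net S hε
  let 𝒮 := Finset.powersetCard s (Finset.univ : Finset ι)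
  have mem_net {v} : v ∈ 𝒮.biUnion N ↔ ∃ S : Finset ι, S.card = s ∧ v ∈ N S := by
    simp [𝒮, Finset.mem_powersetCard]
  refine ⟨𝒮.biUnion N, ⟨fun v hv ↦ ?_, fun v hv ↦ ?_, fun S hS u hu hu1 ↦ ?_⟩, ?_⟩
  · obtain ⟨S, -, hvS⟩ := mem_net.mp hv
    exact (hNmem S v hvS).2
  · obtain ⟨S, rfl, hvS⟩ := mem_net.mp hv
    exact ncard_support_le_of_mem_supportedOn (hNmem S v hvS).1
  · obtain ⟨v, hv, huv⟩ := hNnet S u hu hu1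
    exact ⟨v, mem_net.mpr ⟨S, hS, hv⟩, (hNmem S v hv).1, huv⟩
  · calc (_ : ℝ) ≤ ∑ S ∈ 𝒮, ((N S).card : ℝ) := mod_cast Finset.card_biUnion_le
      _ ≤ ∑ S ∈ 𝒮, (1 + 2 / ε) ^ s :=
          Finset.sum_le_sum fun S hS ↦ (Finset.mem_powersetCard.mp hS).2 ▸ hNcard S
      _ = _ := by simp [𝒮]

theorem IsSparseNet.one_sub_two_mul_abs_le [Fintype ι] {s : ℕ} {ε G : ℝ}
    {𝒩 : Finset (EuclideanSpace ℝ ι)} (h𝒩 : IsSparseNet s ε 𝒩) (hs : s ≤ Fintype.card ι)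
    {Q : QuadraticMap ℝ (EuclideanSpace ℝ ι) ℝ} (hQ : Continuous Q) (hG : ∀ v ∈ 𝒩, |Q v| ≤ G)
    {u : EuclideanSpace ℝ ι} (hu : (Function.support u).ncard ≤ s) (hu1 : ‖u‖ ≤ 1) :
    (1 - 2 * ε) * |Q u| ≤ G := by
  obtain ⟨S, hS, huS⟩ := exists_mem_supportedOn_of_ncard_support_le hs hu
  refine Q.one_sub_two_mul_abs_le_of_net hQ (N := ↑𝒩 ∩ supportedOn S) Set.inter_subset_right
    (fun v hv ↦ ⟨h𝒩.norm_le_one v hv.1, hG v hv.1⟩) (fun u hu hu1 ↦ ?_) huS hu1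
  obtain ⟨v, hv, hvS, huv⟩ := h𝒩.exists_norm_sub_le S hS u hu hu1
  exact ⟨v, ⟨hv, hvS⟩, huv⟩

theorem IsSparseNet.exists_le_abs_of_le_iSup [Fintype ι] [DecidableEq ι] {s : ℕ}
    {𝒩 : Finset (EuclideanSpace ℝ ι)} (h𝒩 : IsSparseNet s (1 / 3) 𝒩) (hs : s ≤ Fintype.card ι)
    (A : Matrix ι ι ℝ) {R : ℝ}
    (hR : 3 * R ≤ ⨆ u : {u : ι → ℝ // {j | u j ≠ 0}.ncard ≤ s ∧ √(∑ i, u i ^ 2) ≤ 1},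
      |u.1 ⬝ᵥ A *ᵥ u.1|) :
    ∃ v ∈ 𝒩, R ≤ |v.ofLp ⬝ᵥ A *ᵥ v.ofLp| := by
  let Q := A.toQuadraticForm'.comp (WithLp.linearEquiv 2 ℝ (ι → ℝ)).toLinearMap
  have hQ (x : EuclideanSpace ℝ ι) : Q x = x.ofLp ⬝ᵥ A *ᵥ x.ofLp := by
    simp [Q, Matrix.toQuadraticForm', Matrix.toLinearMap₂'_apply']
  have hQcont : Continuous Q := by
    rw [show ⇑Q = fun x ↦ x.ofLp ⬝ᵥ A *ᵥ x.ofLp from funext hQ]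
    fun_prop
  obtain ⟨S, -, hS⟩ := Finset.exists_subset_card_eq (s := Finset.univ) (by simpa using hs)
  obtain ⟨v, hv, -⟩ := h𝒩.exists_norm_sub_le S hS 0 (supportedOn S).zero_mem (by simp)
  obtain ⟨w, hw, hwmax⟩ := 𝒩.exists_max_image (fun v ↦ |Q v|) ⟨v, hv⟩
  refine ⟨w, hw, ?_⟩
  have : Nonempty {u : ι → ℝ // {j | u j ≠ 0}.ncard ≤ s ∧ √(∑ i, u i ^ 2) ≤ 1} :=
    ⟨⟨0, by simp, by simp⟩⟩
  have hsup : (⨆ u : {u : ι → ℝ // {j | u j ≠ 0}.ncard ≤ s ∧ √(∑ i, u i ^ 2) ≤ 1},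
      |u.1 ⬝ᵥ A *ᵥ u.1|) ≤ 3 * |Q w| := by
    refine ciSup_le fun u ↦ ?_
    have hu := h𝒩.one_sub_two_mul_abs_le hs hQcont hwmax (u := WithLp.toLp 2 u.1) u.2.1
      (by simpa [EuclideanSpace.norm_eq] using u.2.2)
    rw [hQ] at hu
    linarith
  rw [← hQ]
  linarith

end Sparse

theorem stmt_12_general {Ω : Type*} [MeasurableSpace Ω] (P : Measure Ω)
    (d s : ℕ) (hsd : s ≤ d)
    (C : Ω → Matrix (Fin d) (Fin d) ℝ)
    (R p : ℝ) (hp : 0 ≤ p)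
    (hyp : ∀ u : Fin d → ℝ, {j | u j ≠ 0}.ncard ≤ s →
      Real.sqrt (∑ i, u i ^ 2) ≤ 1 →
      P {ω | R ≤ |u ⬝ᵥ (C ω) *ᵥ u|} ≤ ENNReal.ofReal p) :
    P {ω | 3 * R ≤
        ⨆ u : {u : Fin d → ℝ //
            {j | u j ≠ 0}.ncard ≤ s ∧ Real.sqrt (∑ i, u i ^ 2) ≤ 1},
          |u.1 ⬝ᵥ (C ω) *ᵥ u.1|}
      ≤ ENNReal.ofReal
          (21 ^ s * min ((d : ℝ) ^ s) ((Real.exp 1 * d / s) ^ s) * p) := by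
  obtain ⟨𝒩, h𝒩, hcard⟩ := exists_isSparseNet (ι := Fin d) s (ε := 1 / 3) (by norm_num)
  have hcount : (𝒩.card : ℝ) ≤ 21 ^ s * min ((d : ℝ) ^ s) ((Real.exp 1 * d / s) ^ s) := by
    rw [Fintype.card_fin] at hcard
    calc (𝒩.card : ℝ) ≤ d.choose s * 7 ^ s := by norm_num at hcard; exact hcard
      _ ≤ min ((d : ℝ) ^ s) ((Real.exp 1 * d / s) ^ s) * 21 ^ s := by
          gcongr
          · exact Nat.choose_le_min_pow d s
          · norm_num
      _ = _ := mul_comm _ _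
  calc P _ ≤ P (⋃ v ∈ 𝒩, {ω | R ≤ |v.ofLp ⬝ᵥ C ω *ᵥ v.ofLp|}) := measure_mono fun ω hω ↦ by
        simpa using h𝒩.exists_le_abs_of_le_iSup (by simpa using hsd) (C ω) hω
    _ ≤ ∑ v ∈ 𝒩, P {ω | R ≤ |v.ofLp ⬝ᵥ C ω *ᵥ v.ofLp|} := measure_biUnion_finset_le _ _
    _ ≤ ∑ _v ∈ 𝒩, ENNReal.ofReal p := Finset.sum_le_sum fun v hv ↦
        hyp v.ofLp (h𝒩.ncard_support_le v hv)
          (by simpa [EuclideanSpace.norm_eq] using h𝒩.norm_le_one v hv)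
    _ = ENNReal.ofReal (𝒩.card * p) := by
        rw [Finset.sum_const, nsmul_eq_mul, ENNReal.ofReal_mul (by positivity),
          ENNReal.ofReal_natCast]
    _ ≤ _ := ENNReal.ofReal_le_ofReal (by gcongr)

/-- from a pointwise deviation bound over `s`-sparse unit vectors, a uniform
deviation bound over the set `K(s)` of `s`-sparse vectors in the unit ball. -/
theorem stmt_12 {Ω : Type*} [MeasurableSpace Ω] (P : Measure Ω) [IsProbabilityMeasure P]
    (d s : ℕ) (hs : 1 ≤ s) (hsd : s ≤ d)
    (C : Ω → Matrix (Fin d) (Fin d) ℝ)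
    (hmeas : ∀ i j, Measurable fun ω => C ω i j)
    (hsymm : ∀ ω, (C ω).IsSymm)
    (R p : ℝ) (hR : 0 ≤ R) (hp : 0 ≤ p)
    (hyp : ∀ u : Fin d → ℝ, {j | u j ≠ 0}.ncard ≤ s →
      Real.sqrt (∑ i, u i ^ 2) ≤ 1 →
      P {ω | R ≤ |u ⬝ᵥ (C ω) *ᵥ u|} ≤ ENNReal.ofReal p) :
    P {ω | 3 * R ≤
        ⨆ u : {u : Fin d → ℝ //
            {j | u j ≠ 0}.ncard ≤ s ∧ Real.sqrt (∑ i, u i ^ 2) ≤ 1},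
          |u.1 ⬝ᵥ (C ω) *ᵥ u.1|}
      ≤ ENNReal.ofReal
          (21 ^ s * min ((d : ℝ) ^ s) ((Real.exp 1 * d / s) ^ s) * p) :=
  stmt_12_general P d s hsd C R p hp hyp
end
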